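/- Let P be a formula-based program. Then for every countable ordinal α the following hold: (1) M_γ =_γ M_α for all γ < α; (2) ⊔_{γ<α} M_γ ⊑_α T_P(⊔_{γ<α} M_γ); (3) M_α = T^{ω₁}_{P,α}(⊔_{γ<α} M_γ); (4) M_α ⊑_{α+1} T_P(M_α). -/

import Mathlib

/-!
Infinite-valued semantics for formula-based logic programs
(Rondogiannis–Wadge style), following Lüdecke,
"Every Formula-Based Logic Program Has a Least Infinite-Valued Model".
-/

noncomputable section

namespace ILP

attribute [local instance] Classical.propDecidable

/-- The first uncountable ordinal. -/
def omega1 : Ordinal.{0} := Ordinal.omega 1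

lemma omega1_isLimit : Order.IsSuccLimit omega1 := Cardinal.isSuccLimit_omega 1

lemma zero_lt_omega1 : (0 : Ordinal) < omega1 := omega1_isLimit.pos

lemma succ_lt_omega1 {a : Ordinal} (h : a < omega1) : a + 1 < omega1 := by
  rw [Ordinal.add_one_eq_succ]
  exact omega1_isLimit.succ_lt h

/-- Pre-truth-values: `F α`, `0`, `T α` for arbitrary ordinals `α`. -/
inductive TVPre : Type 1 where
  | F : Ordinal → TVPre
  | zero : TVPre
  | T : Ordinal → TVPre

/-- A pre-truth-value is countable if its index is a countable ordinal. -/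
def TVPre.countable : TVPre → Prop
  | .F a => a < omega1
  | .zero => True
  | .T a => a < omega1

/-- The set `W` of truth values:
`F_α` (false values) for countable `α`, `0`, and `T_α` (true values) for countable `α`. -/
def W : Type 1 := {v : TVPre // v.countable}

/-- The strict order on truth values:
`F_0 < F_1 < ... < 0 < ... < T_1 < T_0`. -/
def TVPre.lt : TVPre → TVPre → Prop
  | .F a, .F b => a < b
  | .F _, .zero => True
  | .F _, .T _ => True
  | .zero, .T _ => True
  | .T a, .T b => b < a
  | _, _ => False

instance : LT W := ⟨fun x y => TVPre.lt x.1 y.1⟩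

instance : LE W := ⟨fun x y => x = y ∨ x < y⟩

lemma TVPre.lt_trans {a b c : TVPre} (hab : a.lt b) (hbc : b.lt c) : a.lt c := by
  cases a <;> cases b <;> cases c <;> simp_all [TVPre.lt] <;>
    first | exact hab.trans hbc | exact hbc.trans hab

lemma TVPre.lt_irrefl {a : TVPre} (h : a.lt a) : False := by
  cases a <;> simp_all [TVPre.lt]

instance instLinearOrderW : LinearOrder W where
  le_refl a := Or.inl rfl
  le_trans a b c hab hbc := by
    rcases hab with rfl | hab
    · exact hbc
    rcases hbc with rfl | hbc
    · exact Or.inr hab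
    · exact Or.inr (TVPre.lt_trans hab hbc)
  le_antisymm a b hab hba := by
    rcases hab with rfl | hab
    · rfl
    rcases hba with rfl | hba
    · rfl
    exact absurd (TVPre.lt_trans hab hba) TVPre.lt_irrefl
  le_total a b := by
    obtain ⟨a1, ha⟩ := a
    obtain ⟨b1, hb⟩ := b
    have tri : a1 = b1 ∨ a1.lt b1 ∨ b1.lt a1 := by
      cases a1 <;> cases b1 <;> simp [TVPre.lt] <;> (try rename_i x y) <;>
        (try rcases lt_trichotomy x y with h | h | h) <;> tauto
    rcases tri with h | h | h
    · exact Or.inl (Or.inl (Subtype.ext h))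
    · exact Or.inl (Or.inr h)
    · exact Or.inr (Or.inr h)
  lt_iff_le_not_ge a b := by
    constructor
    · intro h
      refine ⟨Or.inr h, ?_⟩
      rintro (rfl | h')
      · exact TVPre.lt_irrefl h
      · exact TVPre.lt_irrefl (TVPre.lt_trans h h')
    · rintro ⟨rfl | h, h2⟩
      · exact absurd (Or.inl rfl) h2
      · exact h
  toDecidableLE := Classical.decRel _

/-- The false value `F_α`. -/
def WF (a : Ordinal) (h : a < omega1) : W := ⟨.F a, h⟩

/-- The true value `T_α`. -/
def WT (a : Ordinal) (h : a < omega1) : W := ⟨.T a, h⟩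

/-- The undefined value `0`. -/
def WZ : W := ⟨.zero, trivial⟩

/-- `deg w < α` : the degree of `w` (which is `∞` for `0`) is less than `α`. -/
def degLT (w : W) (α : Ordinal) : Prop :=
  match w.1 with
  | .F a => a < α
  | .zero => False
  | .T a => a < α

/-- The set of indices of true values occurring in `M`. -/
def TIdx (M : Set W) : Set Ordinal := {a | ∃ w ∈ M, w.1 = TVPre.T a}

/-- The set of indices of false values occurring in `M`. -/
def FIdx (M : Set W) : Set Ordinal := {a | ∃ w ∈ M, w.1 = TVPre.F a}

lemma mem_lt_omega1_of_TIdx {M : Set W} {a : Ordinal} (h : a ∈ TIdx M) : a < omega1 := by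
  obtain ⟨w, _, hw⟩ := h
  have := w.2
  rw [hw] at this
  exact this

lemma mem_lt_omega1_of_FIdx {M : Set W} {a : Ordinal} (h : a ∈ FIdx M) : a < omega1 := by
  obtain ⟨w, _, hw⟩ := h
  have := w.2
  rw [hw] at this
  exact this

/-- The least upper bound of a subset of `W`. -/
def Wsup (M : Set W) : W :=
  if h : (TIdx M).Nonempty then
    WT (sInf (TIdx M))
      (lt_of_le_of_lt (csInf_le' h.choose_spec) (mem_lt_omega1_of_TIdx h.choose_spec))
  else if WZ ∈ M then WZ
  else if h2 : sSup (FIdx M) < omega1 then WF (sSup (FIdx M)) h2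
  else WZ

/-- The greatest lower bound of a subset of `W`. -/
def Winf (M : Set W) : W :=
  if h : (FIdx M).Nonempty then
    WF (sInf (FIdx M))
      (lt_of_le_of_lt (csInf_le' h.choose_spec) (mem_lt_omega1_of_FIdx h.choose_spec))
  else if WZ ∈ M then WZ
  else if h2 : sSup (TIdx M) < omega1 then WT (sSup (TIdx M)) h2
  else WZ

/-- The semantics of negation on `W`. -/
def Wneg : W → W
  | ⟨.F a, h⟩ => WT (a + 1) (succ_lt_omega1 h)
  | ⟨.zero, _⟩ => WZ
  | ⟨.T a, h⟩ => WF (a + 1) (succ_lt_omega1 h)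

/-! ### Syntax -/

/-- A first-order language with finitely many predicate symbols (at least one),
finitely many function symbols and finitely many constants (at least one). -/
structure Language where
  nPred : ℕ
  predAr : Fin nPred → ℕ
  nFun : ℕ
  funAr : Fin nFun → ℕ
  nConst : ℕ
  npos : 1 ≤ nPred
  cpos : 1 ≤ nConst

variable {L : Language}

/-- Terms of the language; variables are indexed by natural numbers. -/
inductive Term (L : Language) : Type where
  | var : ℕ → Term L
  | const : Fin L.nConst → Term L
  | func : (f : Fin L.nFun) → (Fin (L.funAr f) → Term L) → Term L

/-- A term is ground if it contains no variables. -/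
def Term.ground : Term L → Prop
  | .var _ => False
  | .const _ => True
  | .func _ ts => ∀ i, (ts i).ground

/-- The Herbrand universe: the set of ground terms. -/
def HU (L : Language) : Type := {t : Term L // t.ground}

/-- Formulas of the language. -/
inductive Formula (L : Language) : Type where
  | verum : Formula L
  | falsum : Formula L
  | atom : (p : Fin L.nPred) → (Fin (L.predAr p) → Term L) → Formula L
  | neg : Formula L → Formula L
  | conj : Formula L → Formula L → Formula L
  | disj : Formula L → Formula L → Formula L
  | all : ℕ → Formula L → Formula L
  | ex : ℕ → Formula L → Formula L

/-- A ground atom: a predicate symbol applied to ground terms.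
The Herbrand base `H_B` is the type of ground atoms. -/
structure GroundAtom (L : Language) : Type where
  pred : Fin L.nPred
  args : Fin (L.predAr pred) → HU L

/-- An (infinite-valued Herbrand) interpretation. -/
def Interp (L : Language) : Type 1 := GroundAtom L → W

/-- Evaluation of a term under a variable assignment. -/
def Term.evalT (h : ℕ → HU L) : Term L → HU L
  | .var n => h n
  | .const c => ⟨.const c, trivial⟩
  | .func f ts => ⟨.func f fun i => ((ts i).evalT h).1, fun i => ((ts i).evalT h).2⟩

/-- The infinite-valued semantics of formulas, relative to an interpretation and
a variable assignment. -/
def Formula.eval (I : Interp L) : Formula L → (ℕ → HU L) → W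
  | .verum, _ => WT 0 zero_lt_omega1
  | .falsum, _ => WF 0 zero_lt_omega1
  | .atom p ts, h => I ⟨p, fun i => (ts i).evalT h⟩
  | .neg φ, h => Wneg (φ.eval I h)
  | .conj φ ψ, h => min (φ.eval I h) (ψ.eval I h)
  | .disj φ ψ, h => max (φ.eval I h) (ψ.eval I h)
  | .ex v φ, h => Wsup (Set.range fun u : HU L => φ.eval I (Function.update h v u))
  | .all v φ, h => Winf (Set.range fun u : HU L => φ.eval I (Function.update h v u))

/-- The variables occurring in a term. -/
def Term.vars : Term L → Set ℕ
  | .var n => {n}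
  | .const _ => ∅
  | .func _ ts => ⋃ i, (ts i).vars

/-- The free variables of a formula. -/
def Formula.freeVars : Formula L → Set ℕ
  | .verum => ∅
  | .falsum => ∅
  | .atom _ ts => ⋃ i, (ts i).vars
  | .neg φ => φ.freeVars
  | .conj φ ψ => φ.freeVars ∪ ψ.freeVars
  | .disj φ ψ => φ.freeVars ∪ ψ.freeVars
  | .all v φ => φ.freeVars \ {v}
  | .ex v φ => φ.freeVars \ {v}

/-- Applying a substitution to a term. -/
def Term.subst (σ : ℕ → Term L) : Term L → Term L
  | .var n => σ n
  | .const c => .const c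
  | .func f ts => .func f fun i => (ts i).subst σ

/-- Applying a substitution to a formula (bound variables are not substituted). -/
def Formula.subst (σ : ℕ → Term L) : Formula L → Formula L
  | .verum => .verum
  | .falsum => .falsum
  | .atom p ts => .atom p fun i => (ts i).subst σ
  | .neg φ => .neg (φ.subst σ)
  | .conj φ ψ => .conj (φ.subst σ) (ψ.subst σ)
  | .disj φ ψ => .disj (φ.subst σ) (ψ.subst σ)
  | .all v φ => .all v (φ.subst (Function.update σ v (Term.var v)))
  | .ex v φ => .ex v (φ.subst (Function.update σ v (Term.var v)))

/-- A formula-based rule `A ← φ`: the head is an atom `P(t₁,…,tₛ)`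
(hence distinct from `⊤` and `⊥`) and the body is an arbitrary formula. -/
structure Rule (L : Language) : Type where
  headPred : Fin L.nPred
  headArgs : Fin (L.predAr headPred) → Term L
  body : Formula L

/-- The head of a rule, as an atomic formula. -/
def Rule.headAtom (r : Rule L) : Formula L := .atom r.headPred r.headArgs

/-- A formula-based logic program: a finite set of formula-based rules. -/
structure Program (L : Language) : Type where
  rules : Set (Rule L)
  finite : rules.Finite

/-- The set `P_G` of ground instances of a program `P`: pairs `(Aσ, φσ)` obtained
from a rule `A ← φ` of `P` and a substitution `σ` such that `Aσ` is a ground atom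
and `φσ` has no free variables. -/
def groundInstances (P : Program L) : Set (GroundAtom L × Formula L) :=
  {Aφ | ∃ r ∈ P.rules, ∃ σ : ℕ → Term L,
    (∃ hg : ∀ i, ((r.headArgs i).subst σ).ground,
      Aφ.1 = ⟨r.headPred, fun i => ⟨(r.headArgs i).subst σ, hg i⟩⟩) ∧
    Aφ.2 = r.body.subst σ ∧ (r.body.subst σ).freeVars = ∅}

/-- A default variable assignment (possible since there is at least one constant). -/
def defaultAssignment (L : Language) : ℕ → HU L :=
  fun _ => ⟨.const ⟨0, L.cpos⟩, trivial⟩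

/-- The value of a closed formula (independent of the variable assignment). -/
def Formula.evalClosed (I : Interp L) (φ : Formula L) : W :=
  φ.eval I (defaultAssignment L)

/-- The immediate consequence operator `T_P`. -/
def TP (P : Program L) (I : Interp L) : Interp L :=
  fun A => Wsup {w | ∃ φ : Formula L, (A, φ) ∈ groundInstances P ∧ w = φ.evalClosed I}

/-- `I ∥ F_β` : the set of ground atoms receiving value `F_β` under `I`. -/
def Ifalse (I : Interp L) (β : Ordinal) : Set (GroundAtom L) := {A | (I A).1 = TVPre.F β}

/-- `I ∥ T_β` : the set of ground atoms receiving value `T_β` under `I`. -/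
def Itrue (I : Interp L) (β : Ordinal) : Set (GroundAtom L) := {A | (I A).1 = TVPre.T β}

/-- `I =_α J`. -/
def eqa (α : Ordinal) (I J : Interp L) : Prop :=
  ∀ β ≤ α, Ifalse I β = Ifalse J β ∧ Itrue I β = Itrue J β

/-- `I ⊑_α J`. -/
def sqa (α : Ordinal) (I J : Interp L) : Prop :=
  (∀ β < α, eqa β I J) ∧ Ifalse J α ⊆ Ifalse I α ∧ Itrue I α ⊆ Itrue J α

/-- `I ⊏_α J`. -/
def sqlt (α : Ordinal) (I J : Interp L) : Prop := sqa α I J ∧ ¬ eqa α I J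

/-- `I ⊑_∞ J`. -/
def sqinf (I J : Interp L) : Prop := I = J ∨ ∃ α < omega1, sqlt α I J

/-- `I` satisfies the rule `A ← φ`. -/
def satisfies (I : Interp L) (r : Rule L) : Prop :=
  ∀ h : ℕ → HU L, r.body.eval I h ≤ r.headAtom.eval I h

/-- `I` is a model of `P`. -/
def isModel (I : Interp L) (P : Program L) : Prop := ∀ r ∈ P.rules, satisfies I r

/-- The transfinite iterates `T^β_{P,α}(I)`. -/
def iter (P : Program L) (α : Ordinal) (hα : α < omega1) (I : Interp L)
    (β : Ordinal) : Interp L :=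
  Ordinal.limitRecOn β I (fun _ J => TP P J)
    (fun β _ ih A =>
      if degLT (I A) α then I A
      else if ∃ γ, ∃ hγ : γ < β, (ih γ hγ A).1 = TVPre.T α then WT α hα
      else if ∀ γ, ∀ hγ : γ < β, (ih γ hγ A).1 = TVPre.F α then WF α hα
      else WF (α + 1) (succ_lt_omega1 hα))

/-- The union `⊔_{γ<α} I_γ` of a family of interpretations. -/
def unionInterp (α : Ordinal) (hα : α < omega1) (Ig : ∀ γ, γ < α → Interp L) :
    Interp L := fun A =>
  if h : ∃ ζ, ∃ hζ : ζ < α, ((Ig ζ hζ) A).1 = TVPre.F ζ ∨ ((Ig ζ hζ) A).1 = TVPre.T ζ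
  then Ig h.choose h.choose_spec.choose A
  else WF α hα

/-- The approximants `M_α` of a program `P`. -/
def approx (P : Program L) (α : Ordinal) : Interp L :=
  if hα : α < omega1 then
    if (∀ γ, ∀ _ : γ < α, ∀ ζ, ζ < γ → eqa ζ (approx P ζ) (approx P γ)) ∧
        sqa α (unionInterp α hα fun γ _ => approx P γ)
          (TP P (unionInterp α hα fun γ _ => approx P γ))
    then iter P α hα (unionInterp α hα fun γ _ => approx P γ) omega1
    else fun _ => WF 0 zero_lt_omega1
  else fun _ => WF 0 zero_lt_omega1
termination_by α
decreasing_by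
  all_goals first | assumption | exact lt_trans ‹_› ‹_›

/-- The depth `δ_P` of a program `P`. -/
def depth (P : Program L) : Ordinal :=
  sInf {δ | δ < omega1 ∧ ∀ γ, δ ≤ γ → γ < omega1 →
    Ifalse (approx P γ) γ = ∅ ∧ Itrue (approx P γ) γ = ∅}

/-- The least infinite-valued model `M_P` of a program `P`. -/
def MP (P : Program L) : Interp L := fun A =>
  if degLT (approx P (depth P) A) (depth P) then approx P (depth P) A else WZ

/-! ### Three-valued semantics -/

/-- The three truth values `F < 0 < T`. -/
inductive TV3 : Type where
  | F : TV3
  | Z : TV3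
  | T : TV3
deriving DecidableEq

/-- Numeric coding of the three truth values. -/
def TV3.toNat : TV3 → ℕ
  | .F => 0
  | .Z => 1
  | .T => 2

instance : LinearOrder TV3 :=
  LinearOrder.lift' TV3.toNat (fun a b => by
    cases a <;> cases b <;> simp [TV3.toNat])

/-- A three-valued interpretation. -/
def Interp3 (L : Language) : Type := GroundAtom L → TV3

/-- Supremum of a set of three-valued truth values. -/
def sup3 (S : Set TV3) : TV3 :=
  if TV3.T ∈ S then .T else if TV3.Z ∈ S then .Z else .F

/-- Infimum of a set of three-valued truth values. -/
def inf3 (S : Set TV3) : TV3 :=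
  if TV3.F ∈ S then .F else if TV3.Z ∈ S then .Z else .T

/-- Three-valued negation. -/
def neg3 : TV3 → TV3
  | .F => .T
  | .Z => .Z
  | .T => .F

/-- The three-valued semantics of formulas. -/
def Formula.eval3 (K : Interp3 L) : Formula L → (ℕ → HU L) → TV3
  | .verum, _ => .T
  | .falsum, _ => .F
  | .atom p ts, h => K ⟨p, fun i => (ts i).evalT h⟩
  | .neg φ, h => neg3 (φ.eval3 K h)
  | .conj φ ψ, h => min (φ.eval3 K h) (ψ.eval3 K h)
  | .disj φ ψ, h => max (φ.eval3 K h) (ψ.eval3 K h)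
  | .ex v φ, h => sup3 (Set.range fun u : HU L => φ.eval3 K (Function.update h v u))
  | .all v φ, h => inf3 (Set.range fun u : HU L => φ.eval3 K (Function.update h v u))

/-- Collapsing all false values to `F` and all true values to `T`. -/
def collapse : W → TV3 := fun w =>
  match w.1 with
  | .F _ => .F
  | .zero => .Z
  | .T _ => .T

/-- The collapse of an infinite-valued interpretation. -/
def collapseI (I : Interp L) : Interp3 L := fun A => collapse (I A)

/-- `K` is a three-valued model of `P`. -/
def isModel3 (K : Interp3 L) (P : Program L) : Prop :=
  ∀ r ∈ P.rules, ∀ h : ℕ → HU L, r.body.eval3 K h ≤ r.headAtom.eval3 K h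

/-- The three-valued interpretation `M_{P,3}`. -/
def MP3 (P : Program L) : Interp3 L := collapseI (MP P)

/-- The negation degree of a formula. -/
def Formula.negDeg : Formula L → ℕ
  | .verum => 0
  | .falsum => 0
  | .atom _ _ => 0
  | .neg φ => φ.negDeg + 1
  | .conj φ ψ => max φ.negDeg ψ.negDeg
  | .disj φ ψ => max φ.negDeg ψ.negDeg
  | .all _ φ => φ.negDeg
  | .ex _ φ => φ.negDeg

/-!
At level `α` the relation `⊑_α` is pointwise: a value may only move inside the band
`[F_α, T_α]`, from `[F_α, T_α)` into `(F_α, T_α]`, and is frozen outside it (`BandLE`). Negation,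
`min`, `max` and the suprema and infima of `W` respect this relation, hence so does `T_P`.
Starting from `I ⊑_α T_P(I)`, the iterates `T^β_{P,α}(I)` thus form a `⊑_α`-chain, each below its
own `T_P`-image. Along the chain an atom leaves `F_α` and reaches `T_α` at most once, so it settles
at level `α` at a countable stage; as `H_B` is countable, the whole chain settles below `ω₁`. Hence
the `ω₁`-th iterate is a fixed point of `T_P` up to `=_α`, and its atoms not decided up to level
`α` all sit at `F_{α+1}`, which is (4).
By induction on `α`, the union of the earlier approximants agrees with each `M_γ` up to level `γ`
and sends every atom not yet decided to `F_α`; since each `M_γ` is a fixed point of `T_P` up to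
level `γ`, the union lies `⊑_α` below its `T_P`-image, and (1)–(3) follow.
-/

section BandLE

variable {X : Type*} [LinearOrder X]

/-- At level `α` of `W` this is the pointwise form of `⊑_α`, with `b = F_α` and `t = T_α`. -/
def BandLE (b t v w : X) : Prop :=
  v = w ∨ (b ≤ v ∧ v < t ∧ b < w ∧ w ≤ t)

variable {b t v w x v₁ v₂ w₁ w₂ : X}

namespace BandLE

@[refl] lemma refl (v : X) : BandLE b t v v := Or.inl rfl

lemma trans (h₁ : BandLE b t v w) (h₂ : BandLE b t w x) : BandLE b t v x := by
  rcases h₁ with rfl | ⟨hbv, hvt, hbw, hwt⟩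
  · exact h₂
  rcases h₂ with rfl | ⟨-, -, hbx, hxt⟩
  · exact Or.inr ⟨hbv, hvt, hbw, hwt⟩
  · exact Or.inr ⟨hbv, hvt, hbx, hxt⟩

lemma eq_of_lt_left (h : BandLE b t v w) (hv : v < b ∨ t < v) : v = w := by
  rcases h with h | ⟨_, _, _, _⟩
  · exact h
  · rcases hv with hv | hv <;> order

lemma eq_top (h : BandLE b t t w) : w = t := by
  rcases h with h | ⟨_, _, _, _⟩
  · exact h.symm
  · order

lemma eq_bot (h : BandLE b t v b) : v = b := by
  rcases h with h | ⟨_, _, _, _⟩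
  · exact h
  · order

lemma mem_Icc (h : BandLE b t v w) (hv : v ∈ Set.Icc b t) : w ∈ Set.Icc b t := by
  rcases h with rfl | ⟨-, -, hbw, hwt⟩
  exacts [hv, ⟨hbw.le, hwt⟩]

lemma dual (h : BandLE b t v w) :
    BandLE (OrderDual.toDual t) (OrderDual.toDual b) (OrderDual.toDual w)
      (OrderDual.toDual v) := by
  rcases h with rfl | ⟨hbv, hvt, hbw, hwt⟩
  · rfl
  · exact Or.inr ⟨hwt, hbw, hvt, hbv⟩

lemma of_dual {b t v w : Xᵒᵈ} (h : BandLE b t v w) :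
    BandLE (OrderDual.ofDual t) (OrderDual.ofDual b) (OrderDual.ofDual w)
      (OrderDual.ofDual v) :=
  dual (X := Xᵒᵈ) h

lemma min_left (h : BandLE b t v w) (c : X) : BandLE b t (min c v) (min c w) := by
  rcases h with rfl | ⟨hbv, hvt, hbw, hwt⟩
  · rfl
  rcases lt_or_ge c b with hc | hc
  · rw [min_eq_left (by order), min_eq_left (by order)]
  rcases le_or_gt t c with hc' | hc'
  · rw [min_eq_right (by order), min_eq_right (by order)]
    exact Or.inr ⟨hbv, hvt, hbw, hwt⟩
  rcases eq_or_lt_of_le hc with rfl | hc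
  · rw [min_eq_left hbv, min_eq_left hbw.le]
  · exact Or.inr ⟨le_min hc.le hbv, min_lt_of_left_lt hc', lt_min hc hbw,
      min_le_of_right_le hwt⟩

end BandLE

lemma BandLE.min (h₁ : BandLE b t v₁ w₁) (h₂ : BandLE b t v₂ w₂) :
    BandLE b t (Min.min v₁ v₂) (Min.min w₁ w₂) := by
  have h : BandLE b t (Min.min v₁ w₂) (Min.min w₁ w₂) := by
    simpa only [min_comm _ w₂] using h₁.min_left w₂
  exact (h₂.min_left v₁).trans h

lemma BandLE.max (h₁ : BandLE b t v₁ w₁) (h₂ : BandLE b t v₂ w₂) :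
    BandLE b t (Max.max v₁ v₂) (Max.max w₁ w₂) :=
  (h₁.dual.min h₂.dual).of_dual

lemma bandLE_iff :
    BandLE b t v w ↔ ((v < b ∨ t < v ∨ w < b ∨ t < w) → v = w) ∧
      (w = b → v = b) ∧ (v = t → w = t) := by
  constructor
  · rintro (rfl | ⟨_, _, _, _⟩)
    · exact ⟨fun _ => rfl, id, id⟩
    · refine ⟨fun h => ?_, fun h => ?_, fun h => ?_⟩ <;> (try rcases h with h | h | h | h) <;>
        order
  · rintro ⟨hout, hb, ht⟩
    by_cases hvw : v = w
    · exact Or.inl hvw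
    have hin : ¬(v < b ∨ t < v ∨ w < b ∨ t < w) := fun h => hvw (hout h)
    simp only [not_or, not_lt] at hin
    obtain ⟨hbv, hvt, hbw, hwt⟩ := hin
    exact Or.inr ⟨hbv, hvt.lt_of_ne fun h => hvw (h.trans (ht h).symm),
      hbw.lt_of_ne fun h => hvw ((hb h.symm).trans h), hwt⟩

lemma bandLE_top_iff (hbt : b < t) : BandLE b t v t ↔ v ∈ Set.Icc b t := by
  refine ⟨fun h => ?_, fun ⟨hbv, hvt⟩ => ?_⟩
  · rcases h with rfl | ⟨hbv, hvt, -, -⟩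
    exacts [⟨hbt.le, le_rfl⟩, ⟨hbv, hvt.le⟩]
  · rcases hvt.lt_or_eq with hvt | rfl
    exacts [Or.inr ⟨hbv, hvt, hbt, le_rfl⟩, Or.inl rfl]

lemma bandLE_bot_iff (hbt : b < t) : BandLE b t b w ↔ w ∈ Set.Icc b t := by
  refine ⟨fun h => ?_, fun ⟨hbw, hwt⟩ => ?_⟩
  · rcases h with rfl | ⟨-, -, hbw, hwt⟩
    exacts [⟨le_rfl, hbt.le⟩, ⟨hbw.le, hwt⟩]
  · rcases hbw.lt_or_eq with hbw | rfl
    exacts [Or.inr ⟨le_rfl, hbt, hbw, hwt⟩, Or.inl rfl]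

variable {a a' : X} {ι : Type*} {f g : ι → X}

/-- The attainment hypotheses hold in `W`, where a supremum `≥ T_α` is a true value and the true
values are well-ordered downwards. -/
lemma BandLE.isLUB (hf : IsLUB (Set.range f) a) (hg : IsLUB (Set.range g) a')
    (hfa : t ≤ a → a ∈ Set.range f) (hga : t < a' → a' ∈ Set.range g)
    (h : ∀ i, BandLE b t (f i) (g i)) : BandLE b t a a' := by
  have hfg : (∀ i, f i = g i) → a = a' := fun he =>
    hf.unique (by rwa [show f = g from funext he])
  rcases le_or_gt t a with hta | hta
  · obtain ⟨i, rfl⟩ := hfa hta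
    have hfi : f i = g i := (h i).elim id fun ⟨_, hlt, _, _⟩ => absurd hlt (not_lt.2 hta)
    refine Or.inl (le_antisymm (hfi ▸ hg.1 ⟨i, rfl⟩) (hg.2 ?_))
    rintro _ ⟨j, rfl⟩
    rcases h j with hj | ⟨_, _, _, hjt⟩
    · exact hj ▸ hf.1 ⟨j, rfl⟩
    · exact hjt.trans hta
  rcases le_or_gt a' b with hb | hb
  · refine Or.inl (hfg fun i => (h i).elim id fun ⟨_, _, hbi, _⟩ => ?_)
    exact absurd ((hg.1 ⟨i, rfl⟩).trans hb) (not_le.2 hbi)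
  refine Or.inr ⟨?_, hta, hb, ?_⟩
  · by_contra! hab
    refine absurd (hfg fun i => (h i).elim id fun ⟨hbi, _, _, _⟩ => ?_) (by order)
    exact absurd ((hf.1 ⟨i, rfl⟩).trans_lt hab) (not_lt.2 hbi)
  · by_contra! hta'
    obtain ⟨i, rfl⟩ := hga hta'
    rcases h i with hi | ⟨_, _, _, hit⟩
    · exact absurd (hi ▸ hf.1 ⟨i, rfl⟩) (by order)
    · order

lemma BandLE.isGLB (hf : IsGLB (Set.range f) a) (hg : IsGLB (Set.range g) a')
    (hfa : a < b → a ∈ Set.range f) (hga : a' ≤ b → a' ∈ Set.range g)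
    (h : ∀ i, BandLE b t (f i) (g i)) : BandLE b t a a' :=
  BandLE.of_dual (BandLE.isLUB (X := Xᵒᵈ) (f := OrderDual.toDual ∘ g)
    (g := OrderDual.toDual ∘ f) hg.dual hf.dual hga hfa fun i => (h i).dual)

end BandLE

section TruthValues

@[elab_as_elim]
lemma W.ind {motive : W → Prop} (F : ∀ a ha, motive (WF a ha)) (zero : motive WZ)
    (T : ∀ a ha, motive (WT a ha)) (w : W) : motive w := by
  obtain ⟨a | _ | a, ha⟩ := w
  exacts [F a ha, zero, T a ha]

lemma W.ext_iff {v w : W} : v = w ↔ v.1 = w.1 := Subtype.ext_iff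

variable {a b : Ordinal} {ha : a < omega1} {hb : b < omega1}

@[simp] lemma val_WF : (WF a ha).1 = .F a := rfl
@[simp] lemma val_WT : (WT a ha).1 = .T a := rfl
@[simp] lemma val_WZ : WZ.1 = .zero := rfl

@[simp] lemma WF_inj : WF a ha = WF b hb ↔ a = b := by simp [W.ext_iff]
@[simp] lemma WT_inj : WT a ha = WT b hb ↔ a = b := by simp [W.ext_iff]
@[simp] lemma WT_ne_WF : WT a ha ≠ WF b hb := by simp [W.ext_iff]
@[simp] lemma WZ_ne_WF : WZ ≠ WF a ha := by simp [W.ext_iff]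
@[simp] lemma WT_ne_WZ : WT a ha ≠ WZ := by simp [W.ext_iff]

@[simp] lemma WF_lt_WF : WF a ha < WF b hb ↔ a < b := Iff.rfl
@[simp] lemma WT_lt_WT : WT a ha < WT b hb ↔ b < a := Iff.rfl
@[simp] lemma WF_lt_WT : WF a ha < WT b hb := trivial
@[simp] lemma WF_lt_WZ : WF a ha < WZ := trivial
@[simp] lemma WZ_lt_WT : WZ < WT a ha := trivial

@[simp] lemma WF_le_WF : WF a ha ≤ WF b hb ↔ a ≤ b := by simp [le_iff_lt_or_eq]
@[simp] lemma WT_le_WT : WT a ha ≤ WT b hb ↔ b ≤ a := by simp [le_iff_lt_or_eq, eq_comm]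
@[simp] lemma WF_le_WT : WF a ha ≤ WT b hb := WF_lt_WT.le
@[simp] lemma WF_le_WZ : WF a ha ≤ WZ := WF_lt_WZ.le
@[simp] lemma WZ_le_WT : WZ ≤ WT a ha := WZ_lt_WT.le
@[simp] lemma WT_le_WF : ¬ WT a ha ≤ WF b hb := by simp [le_iff_lt_or_eq]
@[simp] lemma WZ_le_WF : ¬ WZ ≤ WF a ha := by simp [le_iff_lt_or_eq]
@[simp] lemma WT_le_WZ : ¬ WT a ha ≤ WZ := by simp [le_iff_lt_or_eq]

@[simp] lemma Wneg_WF : Wneg (WF a ha) = WT (a + 1) (succ_lt_omega1 ha) := rfl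
@[simp] lemma Wneg_WT : Wneg (WT a ha) = WF (a + 1) (succ_lt_omega1 ha) := rfl
@[simp] lemma Wneg_WZ : Wneg WZ = WZ := rfl

end TruthValues

section Completeness

variable {M : Set W}

lemma WF_mem_of_mem_FIdx {a : Ordinal} (h : a ∈ FIdx M) :
    WF a (mem_lt_omega1_of_FIdx h) ∈ M := by
  obtain ⟨w, hw, hwa⟩ := h
  rwa [← show w = WF a _ from W.ext_iff.2 hwa]

lemma WT_mem_of_mem_TIdx {a : Ordinal} (h : a ∈ TIdx M) :
    WT a (mem_lt_omega1_of_TIdx h) ∈ M := by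
  obtain ⟨w, hw, hwa⟩ := h
  rwa [← show w = WT a _ from W.ext_iff.2 hwa]

lemma sSup_FIdx_le {d : Ordinal} {hd : d < omega1} (h : ∀ w ∈ M, w ≤ WF d hd) :
    sSup (FIdx M) ≤ d :=
  csSup_le' fun _ ha => WF_le_WF.1 (h _ (WF_mem_of_mem_FIdx ha))

lemma sSup_TIdx_le {d : Ordinal} {hd : d < omega1} (h : ∀ w ∈ M, WT d hd ≤ w) :
    sSup (TIdx M) ≤ d :=
  csSup_le' fun _ ha => WT_le_WT.1 (h _ (WT_mem_of_mem_TIdx ha))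

lemma isLUB_Wsup (M : Set W) : IsLUB M (Wsup M) := by
  unfold Wsup
  split_ifs with hT hZ hF
  · refine IsGreatest.isLUB ⟨WT_mem_of_mem_TIdx (csInf_mem hT), fun w hw => ?_⟩
    induction w using W.ind with
    | T a ha => exact WT_le_WT.2 (csInf_le' ⟨_, hw, rfl⟩)
    | _ => simp
  · refine IsGreatest.isLUB ⟨hZ, fun w hw => ?_⟩
    induction w using W.ind with
    | T a ha => exact absurd ⟨a, _, hw, rfl⟩ hT
    | _ => simp
  · refine ⟨fun w hw => ?_, fun c hc => ?_⟩
    · induction w using W.ind with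
      | F a ha =>
        exact WF_le_WF.2 (le_csSup ⟨omega1, fun _ h => (mem_lt_omega1_of_FIdx h).le⟩
          ⟨_, hw, rfl⟩)
      | zero => exact absurd hw hZ
      | T a ha => exact absurd ⟨a, _, hw, rfl⟩ hT
    · induction c using W.ind with
      | F d hd => exact WF_le_WF.2 (sSup_FIdx_le hc)
      | _ => simp
  · refine ⟨fun w hw => ?_, fun c hc => ?_⟩
    · induction w using W.ind with
      | F a ha => simp
      | zero => exact absurd hw hZ
      | T a ha => exact absurd ⟨a, _, hw, rfl⟩ hT
    · induction c using W.ind with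
      | F d hd => exact absurd ((sSup_FIdx_le hc).trans_lt hd) hF
      | _ => simp

lemma isGLB_Winf (M : Set W) : IsGLB M (Winf M) := by
  unfold Winf
  split_ifs with hF hZ hT
  · refine IsLeast.isGLB ⟨WF_mem_of_mem_FIdx (csInf_mem hF), fun w hw => ?_⟩
    induction w using W.ind with
    | F a ha => exact WF_le_WF.2 (csInf_le' ⟨_, hw, rfl⟩)
    | _ => simp
  · refine IsLeast.isGLB ⟨hZ, fun w hw => ?_⟩
    induction w using W.ind with
    | F a ha => exact absurd ⟨a, _, hw, rfl⟩ hF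
    | _ => simp
  · refine ⟨fun w hw => ?_, fun c hc => ?_⟩
    · induction w using W.ind with
      | F a ha => exact absurd ⟨a, _, hw, rfl⟩ hF
      | zero => exact absurd hw hZ
      | T a ha =>
        exact WT_le_WT.2 (le_csSup ⟨omega1, fun _ h => (mem_lt_omega1_of_TIdx h).le⟩
          ⟨_, hw, rfl⟩)
    · induction c using W.ind with
      | T d hd => exact WT_le_WT.2 (sSup_TIdx_le hc)
      | _ => simp
  · refine ⟨fun w hw => ?_, fun c hc => ?_⟩
    · induction w using W.ind with
      | F a ha => exact absurd ⟨a, _, hw, rfl⟩ hF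
      | zero => exact absurd hw hZ
      | T a ha => simp
    · induction c using W.ind with
      | T d hd => exact absurd ((sSup_TIdx_le hc).trans_lt hd) hT
      | _ => simp

lemma Wsup_mem_of_WT_le {a : Ordinal} {ha : a < omega1} (h : WT a ha ≤ Wsup M) :
    Wsup M ∈ M := by
  unfold Wsup at h ⊢
  split_ifs at h ⊢ with hT
  · exact WT_mem_of_mem_TIdx (csInf_mem hT)
  all_goals simp at h

lemma Winf_mem_of_le_WF {a : Ordinal} {ha : a < omega1} (h : Winf M ≤ WF a ha) :
    Winf M ∈ M := by
  unfold Winf at h ⊢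
  split_ifs at h ⊢ with hF
  · exact WF_mem_of_mem_FIdx (csInf_mem hF)
  all_goals simp at h

end Completeness

section Degrees

def HasDeg (v : W) (β : Ordinal) : Prop := v.1 = .F β ∨ v.1 = .T β

variable {α β : Ordinal} {v w : W}

lemma degLT_iff_exists_hasDeg : degLT v α ↔ ∃ β < α, HasDeg v β := by
  obtain ⟨a | _ | a, ha⟩ := v <;> simp [degLT, HasDeg]

lemma degLT_iff_lt_or_lt (hα : α < omega1) : degLT v α ↔ v < WF α hα ∨ WT α hα < v := by
  induction v using W.ind <;> simp [degLT]

lemma not_degLT_iff_mem_Icc {hα : α < omega1} :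
    ¬ degLT v α ↔ v ∈ Set.Icc (WF α hα) (WT α hα) := by
  rw [degLT_iff_lt_or_lt hα, Set.mem_Icc, not_or, not_lt, not_lt]

lemma degLT_mono {γ : Ordinal} (h : degLT v α) (hαγ : α ≤ γ) : degLT v γ := by
  rw [degLT_iff_exists_hasDeg] at h ⊢
  obtain ⟨β, hβ, hv⟩ := h
  exact ⟨β, hβ.trans_le hαγ, hv⟩

lemma levels_eq_iff : ((v.1 = .F β ↔ w.1 = .F β) ∧ (v.1 = .T β ↔ w.1 = .T β)) ↔
    (HasDeg v β ∨ HasDeg w β → v = w) := by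
  obtain ⟨a | _ | a, ha⟩ := v <;> obtain ⟨b | _ | b, hb⟩ := w <;>
    simp [HasDeg] <;> grind

end Degrees

section Interpretations

variable {α β : Ordinal} {I J K : Interp L}

lemma levelSets_eq_iff : (Ifalse I β = Ifalse J β ∧ Itrue I β = Itrue J β) ↔
    ∀ A, HasDeg (I A) β ∨ HasDeg (J A) β → I A = J A := by
  simp only [Set.ext_iff, Ifalse, Itrue, Set.mem_ofPred_eq, ← forall_and, levels_eq_iff]

lemma eqa_iff_hasDeg :
    eqa α I J ↔ ∀ A, ∀ β ≤ α, HasDeg (I A) β ∨ HasDeg (J A) β → I A = J A := by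
  simp only [eqa, levelSets_eq_iff]
  exact ⟨fun h A β hβ => h β hβ A, fun h β hβ A => h A β hβ⟩

lemma forall_lt_eqa_iff :
    (∀ β < α, eqa β I J) ↔ ∀ A, degLT (I A) α ∨ degLT (J A) α → I A = J A := by
  simp only [eqa_iff_hasDeg, degLT_iff_exists_hasDeg]
  constructor
  · rintro h A (⟨β, hβ, hd⟩ | ⟨β, hβ, hd⟩)
    exacts [h β hβ A β le_rfl (Or.inl hd), h β hβ A β le_rfl (Or.inr hd)]
  · intro h β hβ A γ hγ hd
    exact h A (hd.imp (fun hd => ⟨γ, hγ.trans_lt hβ, hd⟩) fun hd => ⟨γ, hγ.trans_lt hβ, hd⟩)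

lemma eqa.eq_of_hasDeg (h : eqa α I J) {A : GroundAtom L} (hd : HasDeg (I A) α) :
    J A = I A :=
  (eqa_iff_hasDeg.1 h A α le_rfl (Or.inl hd)).symm

lemma eqa_refl (α : Ordinal) (I : Interp L) : eqa α I I := fun _ _ => ⟨rfl, rfl⟩

lemma eqa.symm (h : eqa α I J) : eqa α J I := fun β hβ => ⟨(h β hβ).1.symm, (h β hβ).2.symm⟩

lemma eqa.trans (h₁ : eqa α I J) (h₂ : eqa α J K) : eqa α I K :=
  fun β hβ => ⟨(h₁ β hβ).1.trans (h₂ β hβ).1, (h₁ β hβ).2.trans (h₂ β hβ).2⟩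

lemma eqa.mono (h : eqa α I J) (hβ : β ≤ α) : eqa β I J := fun γ hγ => h γ (hγ.trans hβ)

lemma sqa_refl (α : Ordinal) (I : Interp L) : sqa α I I :=
  ⟨fun β _ => eqa_refl β I, subset_rfl, subset_rfl⟩

lemma sqa.trans (h₁ : sqa α I J) (h₂ : sqa α J K) : sqa α I K :=
  ⟨fun β hβ => (h₁.1 β hβ).trans (h₂.1 β hβ), h₂.2.1.trans h₁.2.1, h₁.2.2.trans h₂.2.2⟩

lemma eqa_iff_sqa_and_sqa : eqa α I J ↔ sqa α I J ∧ sqa α J I := by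
  constructor
  · intro h
    exact ⟨⟨fun β hβ => h.mono hβ.le, (h α le_rfl).1.ge, (h α le_rfl).2.le⟩,
      ⟨fun β hβ => h.symm.mono hβ.le, (h α le_rfl).1.le, (h α le_rfl).2.ge⟩⟩
  · rintro ⟨⟨hlt, hF, hT⟩, ⟨-, hF', hT'⟩⟩ β hβ
    rcases hβ.lt_or_eq with hβ | rfl
    exacts [hlt β hβ β le_rfl, ⟨hF'.antisymm hF, hT.antisymm hT'⟩]

lemma eqa_of_sqa (h : sqa α I J) (hα : ∀ A, HasDeg (I A) α ∨ HasDeg (J A) α → I A = J A) :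
    eqa α I J := fun β hβ => by
  rcases hβ.lt_or_eq with hβ | rfl
  exacts [h.1 β hβ β le_rfl, levelSets_eq_iff.2 hα]

lemma sqa_iff_forall_bandLE (hα : α < omega1) :
    sqa α I J ↔ ∀ A, BandLE (WF α hα) (WT α hα) (I A) (J A) := by
  simp only [sqa, forall_lt_eqa_iff, bandLE_iff, degLT_iff_lt_or_lt hα, or_assoc,
    Set.subset_def, Ifalse, Itrue, Set.mem_ofPred_eq, W.ext_iff, val_WF, val_WT, ← forall_and]

lemma sqa_of_forall_eqa (hα : α < omega1) (h : ∀ β < α, eqa β I J)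
    (hI : ∀ A, degLT (I A) α ∨ I A = WF α hα) : sqa α I J := by
  refine ⟨h, fun A hA => ?_, fun A hA => ?_⟩ <;> rcases hI A with hd | he
  · rw [forall_lt_eqa_iff.1 h A (Or.inl hd)] at hd
    simp [degLT, hA.out] at hd
  · simp [Ifalse, he]
  · simp [degLT, hA.out] at hd
  · simp [Itrue, he] at hA

end Interpretations

section Monotonicity

variable {α : Ordinal} {hα : α < omega1}

lemma BandLE.Wneg {v w : W} (h : BandLE (WF α hα) (WT α hα) v w) :
    BandLE (WF α hα) (WT α hα) (Wneg v) (Wneg w) := by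
  rcases h with rfl | ⟨hbv, hvt, hbw, hwt⟩
  · rfl
  refine Or.inr ⟨?_, ?_, ?_, ?_⟩
  · induction v using W.ind <;> simp_all [le_of_lt]
  · induction v using W.ind <;> simp_all [Order.lt_add_one_iff]
  · induction w using W.ind <;> simp_all [Order.lt_add_one_iff]
  · induction w using W.ind <;> simp_all [le_of_lt]

lemma Formula.eval_bandLE {I J : Interp L} (h : ∀ A, BandLE (WF α hα) (WT α hα) (I A) (J A))
    (φ : Formula L) (hv : ℕ → HU L) :
    BandLE (WF α hα) (WT α hα) (φ.eval I hv) (φ.eval J hv) := by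
  induction φ generalizing hv with
  | verum | falsum => rfl
  | atom p ts => exact h _
  | neg φ ih => exact (ih hv).Wneg
  | conj φ ψ ihφ ihψ => exact (ihφ hv).min (ihψ hv)
  | disj φ ψ ihφ ihψ => exact (ihφ hv).max (ihψ hv)
  | ex v φ ih =>
    exact BandLE.isLUB (isLUB_Wsup _) (isLUB_Wsup _) Wsup_mem_of_WT_le
      (fun h => Wsup_mem_of_WT_le h.le) fun u => ih _
  | all v φ ih =>
    exact BandLE.isGLB (isGLB_Winf _) (isGLB_Winf _) (fun h => Winf_mem_of_le_WF h.le)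
      Winf_mem_of_le_WF fun u => ih _

lemma TP_apply (P : Program L) (I : Interp L) (A : GroundAtom L) :
    TP P I A =
      Wsup (Set.range fun φ : {φ // (A, φ) ∈ groundInstances P} => φ.1.evalClosed I) := by
  simp only [TP, Set.range, Subtype.exists, exists_prop, eq_comm]

lemma sqa.TP (hα : α < omega1) (P : Program L) {I J : Interp L} (h : sqa α I J) :
    sqa α (TP P I) (TP P J) := by
  rw [sqa_iff_forall_bandLE hα] at h ⊢
  intro A
  rw [TP_apply, TP_apply]
  exact BandLE.isLUB (isLUB_Wsup _) (isLUB_Wsup _) Wsup_mem_of_WT_le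
    (fun h => Wsup_mem_of_WT_le h.le) fun φ => φ.1.eval_bandLE h _

lemma eqa.TP (hα : α < omega1) (P : Program L) {I J : Interp L} (h : eqa α I J) :
    eqa α (TP P I) (TP P J) := by
  rw [eqa_iff_sqa_and_sqa] at h ⊢
  exact ⟨h.1.TP hα P, h.2.TP hα P⟩

end Monotonicity

section LimitValue

variable {α : Ordinal} {hα : α < omega1} {v x : W} {c : Ordinal → W} {β : Ordinal}

def limitValue (α : Ordinal) (hα : α < omega1) (v : W) (c : Ordinal → W) (β : Ordinal) : W :=
  if degLT v α then v
  else if ∃ γ, ∃ _ : γ < β, (c γ).1 = TVPre.T α then WT α hα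
  else if ∀ γ, ∀ _ : γ < β, (c γ).1 = TVPre.F α then WF α hα
  else WF (α + 1) (succ_lt_omega1 hα)

lemma bandLE_limitValue (hv : ∀ γ < β, BandLE (WF α hα) (WT α hα) v (c γ)) {γ : Ordinal}
    (hγ : γ < β) : BandLE (WF α hα) (WT α hα) (c γ) (limitValue α hα v c β) := by
  unfold limitValue
  split_ifs with hlow hT hF
  · rw [(hv γ hγ).eq_of_lt_left ((degLT_iff_lt_or_lt hα).1 hlow)]
  · exact (bandLE_top_iff WF_lt_WT).2 ((hv γ hγ).mem_Icc (not_degLT_iff_mem_Icc.1 hlow))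
  · rw [show c γ = WF α hα from W.ext_iff.2 (hF γ hγ)]
  · obtain ⟨hbc, hct⟩ := (hv γ hγ).mem_Icc (not_degLT_iff_mem_Icc.1 hlow)
    have hct : c γ < WT α hα := hct.lt_of_ne fun h => hT ⟨γ, hγ, by rw [h]; rfl⟩
    exact Or.inr ⟨hbc, hct, by simp, by simp⟩

lemma limitValue_bandLE (hv : BandLE (WF α hα) (WT α hα) v x)
    (hc : ∀ γ < β, BandLE (WF α hα) (WT α hα) (c γ) x) :
    BandLE (WF α hα) (WT α hα) (limitValue α hα v c β) x := by
  unfold limitValue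
  split_ifs with hlow hT hF
  · exact hv
  · obtain ⟨γ, hγ, hcT⟩ := hT
    exact (show c γ = WT α hα from W.ext_iff.2 hcT) ▸ hc γ hγ
  · exact (bandLE_bot_iff WF_lt_WT).2 (hv.mem_Icc (not_degLT_iff_mem_Icc.1 hlow))
  · obtain ⟨γ, hγ, hcF⟩ : ∃ γ < β, (c γ).1 ≠ TVPre.F α := by simpa using hF
    obtain ⟨hbx, hxt⟩ := hv.mem_Icc (not_degLT_iff_mem_Icc.1 hlow)
    refine Or.inr ⟨by simp, by simp, hbx.lt_of_ne fun h => hcF ?_, hxt⟩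
    have hcx := hc γ hγ
    rw [← h] at hcx
    rw [hcx.eq_bot]
    rfl

/-- Along a `⊑_α`-chain the value at level `α` changes at most twice, so it settles. -/
lemma exists_stable_limitValue (hβ : 0 < β)
    (hv : ∀ γ < β, BandLE (WF α hα) (WT α hα) v (c γ))
    (hc : ∀ γ η, γ ≤ η → η < β → BandLE (WF α hα) (WT α hα) (c γ) (c η)) :
    ∃ δ < β, ∀ η, δ ≤ η → η < β →
      HasDeg (c η) α ∨ HasDeg (limitValue α hα v c β) α → c η = limitValue α hα v c β := by
  unfold limitValue
  split_ifs with hlow hT hF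
  · exact ⟨0, hβ, fun η _ hη _ =>
      ((hv η hη).eq_of_lt_left ((degLT_iff_lt_or_lt hα).1 hlow)).symm⟩
  · obtain ⟨γ, hγ, hcT⟩ := hT
    exact ⟨γ, hγ, fun η hγη hη _ =>
      ((show c γ = WT α hα from W.ext_iff.2 hcT) ▸ hc γ η hγη hη).eq_top⟩
  · exact ⟨0, hβ, fun η _ hη _ => W.ext_iff.2 (hF η hη)⟩
  · obtain ⟨γ, hγ, hcF⟩ : ∃ γ < β, (c γ).1 ≠ TVPre.F α := by simpa using hF
    refine ⟨γ, hγ, fun η hγη hη hd => absurd hd ?_⟩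
    rintro ((hF' | hT') | (hF' | hT'))
    · have hcη := hc γ η hγη hη
      rw [show c η = WF α hα from W.ext_iff.2 hF'] at hcη
      exact hcF (by rw [hcη.eq_bot]; rfl)
    · exact hT ⟨η, hη, hT'⟩
    · simp at hF'
    · simp at hT'

lemma limitValue_degLT_or_eq :
    degLT (limitValue α hα v c β) (α + 1) ∨
      limitValue α hα v c β = WF (α + 1) (succ_lt_omega1 hα) := by
  unfold limitValue
  split_ifs with hlow
  · exact Or.inl (degLT_mono hlow le_self_add)
  · exact Or.inl (lt_add_one α)
  · exact Or.inl (lt_add_one α)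
  · exact Or.inr rfl

end LimitValue

section Iteration

variable {P : Program L} {α : Ordinal} {hα : α < omega1} {I : Interp L}

lemma iter_zero : iter P α hα I 0 = I := Ordinal.limitRecOn_zero _ _ _

lemma iter_add_one (β : Ordinal) : iter P α hα I (β + 1) = TP P (iter P α hα I β) :=
  Ordinal.limitRecOn_add_one _ _ _ _

lemma iter_limit {β : Ordinal} (hβ : Order.IsSuccLimit β) (A : GroundAtom L) :
    iter P α hα I β A = limitValue α hα (I A) (fun γ => iter P α hα I γ A) β :=
  congrFun (Ordinal.limitRecOn_limit (motive := fun _ => Interp L) _ _ _ _ hβ) A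

lemma sqa_iter (hI : sqa α I (TP P I)) (β : Ordinal) :
    (∀ γ ≤ β, sqa α (iter P α hα I γ) (iter P α hα I β)) ∧
      sqa α (iter P α hα I β) (TP P (iter P α hα I β)) := by
  induction β using Ordinal.limitRecOn with
  | zero =>
    refine ⟨fun γ hγ => ?_, iter_zero ▸ hI⟩
    rw [nonpos_iff_eq_zero.1 hγ]
    exact sqa_refl _ _
  | add_one β ih =>
    rw [iter_add_one]
    refine ⟨fun γ hγ => ?_, ih.2.TP hα P⟩
    rcases hγ.lt_or_eq with hγ | rfl
    · exact (ih.1 γ (Order.lt_add_one_iff.1 hγ)).trans ih.2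
    · rw [iter_add_one]
      exact sqa_refl _ _
  | limit β hβ ih =>
    have hI₀ : ∀ γ < β, sqa α I (iter P α hα I γ) := fun γ hγ => by
      simpa only [iter_zero] using (ih γ hγ).1 0 zero_le
    have hlt : ∀ γ < β, sqa α (iter P α hα I γ) (iter P α hα I β) := by
      intro γ hγ
      rw [sqa_iff_forall_bandLE hα]
      intro A
      rw [iter_limit hβ]
      exact bandLE_limitValue (fun γ' hγ' => (sqa_iff_forall_bandLE hα).1 (hI₀ γ' hγ') A) hγ
    refine ⟨fun γ hγ => hγ.lt_or_eq.elim (hlt γ) fun h => h ▸ sqa_refl _ _, ?_⟩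
    rw [sqa_iff_forall_bandLE hα]
    intro A
    have hIβ : sqa α I (iter P α hα I β) := by simpa only [iter_zero] using hlt 0 hβ.pos
    have hv := (sqa_iff_forall_bandLE hα).1 (hI.trans (hIβ.TP hα P)) A
    have hc := fun γ hγ =>
      (sqa_iff_forall_bandLE hα).1 ((ih γ hγ).2.trans ((hlt γ hγ).TP hα P)) A
    rw [iter_limit hβ A]
    exact limitValue_bandLE hv hc

lemma sqa_self_iter (hI : sqa α I (TP P I)) (β : Ordinal) : sqa α I (iter P α hα I β) := by
  simpa only [iter_zero] using (sqa_iter (hα := hα) hI β).1 0 zero_le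

end Iteration

section Countability


def Term.code : Term L → ℕ
  | .var n => Nat.pair 0 n
  | .const c => Nat.pair 1 c
  | .func f ts => Nat.pair 2 (Nat.pair f (Encodable.encode (List.ofFn fun i => (ts i).code)))

lemma Term.code_injective : Function.Injective (Term.code (L := L)) := by
  intro t₁ t₂ h
  induction t₁ generalizing t₂ with
  | var n | const c => cases t₂ <;> simp_all [Term.code, Fin.ext_iff]
  | func f ts ih =>
    cases t₂ with
    | var | const => simp [Term.code] at h
    | func f' ts' =>
      simp only [Term.code, Nat.pair_eq_pair, Encodable.encode_inj, true_and] at h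
      obtain ⟨hf, hts⟩ := h
      obtain rfl : f = f' := Fin.ext hf
      obtain rfl : ts = ts' := funext fun i => ih i (congrFun (List.ofFn_inj.1 hts) i)
      rfl

instance : Countable (Term L) := Term.code_injective.countable

instance : Countable (HU L) := Subtype.countable

instance : Countable (GroundAtom L) :=
  (Function.Injective.countable (f := fun A : GroundAtom L => (⟨A.pred, A.args⟩ :
    Σ p : Fin L.nPred, Fin (L.predAr p) → HU L)) fun ⟨_, _⟩ ⟨_, _⟩ h => by cases h; rfl)

end Countability

section Stabilization

variable {P : Program L} {α : Ordinal} {hα : α < omega1} {I : Interp L}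

lemma exists_eqa_iter_omega1 (hI : sqa α I (TP P I)) :
    ∃ δ < omega1, ∀ η, δ ≤ η → η < omega1 →
      eqa α (iter P α hα I η) (iter P α hα I omega1) := by
  have hstable : ∀ A, ∃ δ < omega1, ∀ η, δ ≤ η → η < omega1 →
      HasDeg (iter P α hα I η A) α ∨ HasDeg (iter P α hα I omega1 A) α →
        iter P α hα I η A = iter P α hα I omega1 A := fun A => by
    rw [iter_limit omega1_isLimit A]
    refine exists_stable_limitValue zero_lt_omega1 (fun γ _ => ?_) fun γ η hγη _ => ?_
    · exact (sqa_iff_forall_bandLE hα).1 (sqa_self_iter hI γ) A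
    · exact (sqa_iff_forall_bandLE hα).1 ((sqa_iter hI η).1 γ hγη) A
  choose δ hδ hstable using hstable
  refine ⟨⨆ A, δ A, Ordinal.iSup_lt_omega_one hδ, fun η hη hηω => ?_⟩
  exact eqa_of_sqa ((sqa_iter hI omega1).1 η hηω.le) fun A =>
    hstable A η ((Ordinal.le_iSup δ A).trans hη) hηω

lemma eqa_TP_iter_omega1 (hI : sqa α I (TP P I)) :
    eqa α (iter P α hα I omega1) (TP P (iter P α hα I omega1)) := by
  obtain ⟨δ, hδ, hstable⟩ := exists_eqa_iter_omega1 hI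
  have h := hstable (δ + 1) le_self_add (succ_lt_omega1 hδ)
  rw [iter_add_one] at h
  exact h.symm.trans ((hstable δ le_rfl hδ).TP hα P)

lemma sqa_succ_iter_omega1 (hI : sqa α I (TP P I)) :
    sqa (α + 1) (iter P α hα I omega1) (TP P (iter P α hα I omega1)) := by
  refine sqa_of_forall_eqa (succ_lt_omega1 hα)
    (fun β hβ => (eqa_TP_iter_omega1 hI).mono (Order.lt_add_one_iff.1 hβ)) fun A => ?_
  rw [iter_limit omega1_isLimit A]
  exact limitValue_degLT_or_eq

end Stabilization

section Union

variable {α : Ordinal} {hα : α < omega1} {I : Ordinal → Interp L}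

lemma unionInterp_apply_cases (A : GroundAtom L) :
    (∃ ζ < α, HasDeg (I ζ A) ζ ∧ unionInterp α hα (fun γ _ => I γ) A = I ζ A) ∨
      ((∀ ζ < α, ¬ HasDeg (I ζ A) ζ) ∧ unionInterp α hα (fun γ _ => I γ) A = WF α hα) := by
  unfold unionInterp
  split_ifs with h
  · exact Or.inl ⟨h.choose, h.choose_spec.choose, h.choose_spec.choose_spec, rfl⟩
  · exact Or.inr ⟨fun ζ hζ hd => h ⟨ζ, hζ, hd⟩, rfl⟩

lemma eqa_unionInterp (hI : ∀ ζ γ, ζ ≤ γ → γ < α → eqa ζ (I ζ) (I γ)) {γ : Ordinal}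
    (hγ : γ < α) : eqa γ (I γ) (unionInterp α hα fun γ _ => I γ) := by
  rw [eqa_iff_hasDeg]
  intro A β hβ hd
  rcases unionInterp_apply_cases A with ⟨ζ, hζ, hdζ, hU⟩ | ⟨hnone, hU⟩ <;> rw [hU] at hd ⊢
  · rcases le_total ζ γ with hζγ | hγζ
    · exact (hI ζ γ hζγ hγ).eq_of_hasDeg hdζ
    · exact eqa_iff_hasDeg.1 (hI γ ζ hγζ hζ) A β hβ hd
  · rcases hd with hd | hd
    · exact absurd ((hI β γ hβ hγ).symm.eq_of_hasDeg hd ▸ hd) (hnone β (hβ.trans_lt hγ))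
    · simp only [HasDeg, val_WF, TVPre.F.injEq, reduceCtorEq, or_false] at hd
      exact absurd hγ (hd ▸ hβ).not_gt

lemma sqa_unionInterp_TP (hα : α < omega1) (P : Program L)
    (hI : ∀ ζ γ, ζ ≤ γ → γ < α → eqa ζ (I ζ) (I γ))
    (hfix : ∀ γ < α, eqa γ (I γ) (TP P (I γ))) :
    sqa α (unionInterp α hα fun γ _ => I γ) (TP P (unionInterp α hα fun γ _ => I γ)) := by
  refine sqa_of_forall_eqa hα (fun β hβ => ?_) fun A => ?_
  · have hU := eqa_unionInterp (hα := hα) hI hβ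
    exact hU.symm.trans ((hfix β hβ).trans (hU.TP (hβ.trans hα) P))
  · rcases unionInterp_apply_cases (hα := hα) A with ⟨ζ, hζ, hdζ, hU⟩ | ⟨-, hU⟩
    · exact Or.inl (hU ▸ degLT_iff_exists_hasDeg.2 ⟨ζ, hζ, hdζ⟩)
    · exact Or.inr hU

end Union

/-- properties of the approximants `M_α`. -/
theorem approx_properties {L : Language} (P : Program L) (α : Ordinal)
    (hα : α < omega1) :
    (∀ γ < α, eqa γ (approx P γ) (approx P α)) ∧
    sqa α (unionInterp α hα fun γ _ => approx P γ)
      (TP P (unionInterp α hα fun γ _ => approx P γ)) ∧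
    approx P α = iter P α hα (unionInterp α hα fun γ _ => approx P γ) omega1 ∧
    sqa (α + 1) (approx P α) (TP P (approx P α)) := by
  induction α using WellFoundedLT.induction with
  | _ α IH =>
  have hcoh : ∀ ζ γ, ζ ≤ γ → γ < α → eqa ζ (approx P ζ) (approx P γ) := fun ζ γ hζγ hγ =>
    hζγ.lt_or_eq.elim ((IH γ hγ (hγ.trans hα)).1 ζ) fun h => h ▸ eqa_refl _ _
  have hfix : ∀ γ < α, eqa γ (approx P γ) (TP P (approx P γ)) := fun γ hγ =>
    (IH γ hγ (hγ.trans hα)).2.2.2.1 γ (lt_add_one γ)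
  have hU := sqa_unionInterp_TP hα P hcoh hfix
  have happrox : approx P α = iter P α hα (unionInterp α hα fun γ _ => approx P γ) omega1 := by
    rw [approx]
    exact (dif_pos hα).trans (if_pos ⟨fun γ hγ ζ hζ => hcoh ζ γ hζ.le hγ, hU⟩)
  refine ⟨fun γ hγ => ?_, hU, happrox, happrox ▸ sqa_succ_iter_omega1 hU⟩
  exact (eqa_unionInterp hcoh hγ).trans ((happrox ▸ sqa_self_iter hU omega1).1 γ hγ)

end ILP
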